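/- arXiv:2502.14746 — 5 statements merged into one kernel-verified Lean document; each statement's English description precedes it below -/
import Mathlib

section
/- Let (W,S) be a finite Coxeter system of rank m, and let σ₁⟨J₁⟩ and σ₂⟨J₂⟩ be standard cosets (left cosets of subgroups generated by subsets J₁, J₂ ⊆ S). If |J₁| + |J₂| > m, then the cardinality of σ₁⟨J₁⟩ ∩ σ₂⟨J₂⟩ is even. -/
open Pointwise

/-- If `σ₁⟨J₁⟩` and `σ₂⟨J₂⟩` are standard cosets of a finite Coxeter
system of rank `m` with `|J₁| + |J₂| > m`, then their intersection has even cardinality. -/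
theorem coxeter_standard_cosets_even_intersection
    {B W : Type*} [Fintype B] [Group W] [Fintype W]
    {M : CoxeterMatrix B} (cs : CoxeterSystem M W)
    (σ₁ σ₂ : W) (J₁ J₂ : Finset B) (h : Fintype.card B < J₁.card + J₂.card) :
    Even (Set.ncard
      ((σ₁ • (Subgroup.closure (cs.simple '' ↑J₁) : Set W)) ∩
       (σ₂ • (Subgroup.closure (cs.simple '' ↑J₂) : Set W)))) := by
  classical
  set H₁ := Subgroup.closure (cs.simple '' ↑J₁)
  set H₂ := Subgroup.closure (cs.simple '' ↑J₂)
  -- J₁ ∩ J₂ is nonempty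
  obtain ⟨i, hi⟩ : (J₁ ∩ J₂).Nonempty := by
    rw [← Finset.card_pos]
    have h1 := Finset.card_inter_add_card_union J₁ J₂
    have h2 : (J₁ ∪ J₂).card ≤ Fintype.card B := Finset.card_le_univ _
    omega
  simp only [Finset.mem_inter] at hi
  have hs₁ : cs.simple i ∈ H₁ := Subgroup.subset_closure ⟨i, hi.1, rfl⟩
  have hs₂ : cs.simple i ∈ H₂ := Subgroup.subset_closure ⟨i, hi.2, rfl⟩
  have hsne : cs.simple i ≠ 1 := by
    intro h1
    have := cs.length_simple i
    rw [h1, cs.length_one] at this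
    exact one_ne_zero this.symm
  rcases Set.eq_empty_or_nonempty
      ((σ₁ • (H₁ : Set W)) ∩ (σ₂ • (H₂ : Set W))) with he | ⟨x, hx₁, hx₂⟩
  · rw [he, Set.ncard_empty]; exact Even.zero
  · have key : (σ₁ • (H₁ : Set W)) ∩ (σ₂ • (H₂ : Set W)) = x • ((H₁ ⊓ H₂ : Subgroup W) : Set W) := by
      have e₁ : σ₁ • (H₁ : Set W) = x • (H₁ : Set W) := by
        rw [mem_leftCoset_iff] at hx₁
        rw [leftCoset_eq_iff]
        simpa using hx₁
      have e₂ : σ₂ • (H₂ : Set W) = x • (H₂ : Set W) := by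
        rw [mem_leftCoset_iff] at hx₂
        rw [leftCoset_eq_iff]
        simpa using hx₂
      rw [e₁, e₂, ← Set.smul_set_inter]
      rfl
    rw [key]
    have hcard : (x • ((H₁ ⊓ H₂ : Subgroup W) : Set W)).ncard
        = Nat.card (H₁ ⊓ H₂ : Subgroup W) := by
      rw [Set.ncard_smul_set, ← Nat.card_coe_set_eq, SetLike.coe_sort_coe]
    rw [hcard]
    have hmem : cs.simple i ∈ H₁ ⊓ H₂ := ⟨hs₁, hs₂⟩
    have horder : orderOf (⟨cs.simple i, hmem⟩ : (H₁ ⊓ H₂ : Subgroup W)) = 2 := by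
      apply orderOf_eq_prime
      · ext
        simp [cs.simple_sq i]
      · simp [Subtype.ext_iff, hsne]
    rw [even_iff_two_dvd, ← horder]
    exact orderOf_dvd_natCard _
end

section
/- Let (W,S) be a finite Coxeter system. For w ∈ W define its extension E_w ∈ F₂^W as the indicator function of the coset w⟨S∖D(w)⟩. Then the collection {E_w : w ∈ W} is linearly independent over F₂. -/
/-! The family is triangular with respect to Coxeter length: `E_w(w) = 1`, while
`E_u(w) = 0` whenever `u ≠ w` and `ℓ(w) ≤ ℓ(u)`. Indeed `u` has no right descent in
`J = S ∖ D(u)`, which forces it to be the unique element of minimal length of `u W_J`. That in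
turn rests on the strong exchange condition, which comes from the sign representation of `W` on
`W × F₂`, `s_i · (t, ε) = (s_i t s_i, ε + [t = s_i])`. -/

open Pointwise

/-- The extension `E_w` of `w`: the `F₂`-valued indicator function of the standard
coset `w⟨S∖D(w)⟩`, where `D(w)` is the right descent set of `w`. -/
noncomputable def coxeterExtension {B W : Type*} [Group W]
    {M : CoxeterMatrix B} (cs : CoxeterSystem M W) (w : W) : W → ZMod 2 :=
  Set.indicator (w • (Subgroup.closure (cs.simple '' {i : B | ¬ cs.IsRightDescent w i}) : Set W))
    (fun _ => 1)

namespace CoxeterSystem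

open List

variable {B W : Type*} [Group W] {M : CoxeterMatrix B} (cs : CoxeterSystem M W)

local prefix:100 "s " => cs.simple
local prefix:100 "π " => cs.wordProd
local prefix:100 "ℓ " => cs.length
local prefix:100 "ris " => cs.rightInvSeq

theorem rightInvSeq_alternatingWord (i i' : B) (n : ℕ) :
    ris (alternatingWord i i' n) = ((range n).reverse).map fun k ↦ (s i' * s i) ^ k * s i' := by
  have hinv (k : ℕ) : ((s i * s i') ^ k)⁻¹ = (s i' * s i) ^ k := by
    rw [← inv_pow, mul_inv_rev, inv_simple, inv_simple]
  have hsemiconj (k : ℕ) : s i' * (s i * s i') ^ k = (s i' * s i) ^ k * s i' := by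
    have h : SemiconjBy (s i') (s i * s i') (s i' * s i) := by simp [SemiconjBy, mul_assoc]
    exact (h.pow_right k).eq
  induction n with
  | zero => simp [alternatingWord]
  | succ n ih =>
    rw [alternatingWord_succ', rightInvSeq, ih, range_succ, reverse_append, reverse_singleton,
      singleton_append, map_cons, prod_alternatingWord_eq_mul_pow]
    congr 1
    rcases Nat.even_or_odd n with hn | hn
    · rw [if_pos hn, if_pos hn, one_mul, hinv, mul_assoc, hsemiconj, ← mul_assoc, ← pow_add,
        ← two_mul, Nat.two_mul_div_two_of_even hn]
    · have hn' : n = n / 2 + 1 + n / 2 := by have := Nat.two_mul_div_two_add_one_of_odd hn; omega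
      rw [if_neg (Nat.not_even_iff_odd.mpr hn), if_neg (Nat.not_even_iff_odd.mpr hn), mul_inv_rev,
        hinv, inv_simple, hsemiconj]
      conv_rhs => rw [hn', pow_add, pow_succ]
      simp only [mul_assoc]

theorem rightInvSeq_alternatingWord_two_mul (i i' : B) :
    ris (alternatingWord i i' (2 * M i i'))
      = ris (alternatingWord i i' (M i i')) ++ ris (alternatingWord i i' (M i i')) := by
  have hq : (s i' * s i) ^ M i i' = 1 := cs.simple_mul_simple_pow' i i'
  rw [rightInvSeq_alternatingWord, rightInvSeq_alternatingWord, two_mul, range_add,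
    reverse_append, map_append, map_reverse, map_map, map_reverse]
  congr 1
  rw [← map_reverse, ← map_reverse]
  refine map_congr_left fun k _ ↦ ?_
  simp only [Function.comp_apply, pow_add, hq, one_mul]

theorem prod_map_alternatingWord_two_mul {G : Type*} [Monoid G] (f : B → G) (i i' : B) (m : ℕ) :
    ((alternatingWord i i' (2 * m)).map f).prod = (f i * f i') ^ m := by
  induction m with
  | zero => simp [alternatingWord]
  | succ m ih =>
    rw [Nat.mul_succ, alternatingWord_succ', alternatingWord_succ', if_neg (Nat.not_even_bit1 m),
      if_pos (even_two_mul m), map_cons, map_cons, prod_cons, prod_cons, ih, pow_succ', mul_assoc]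

section SignRepresentation

variable [DecidableEq W]

def signPermFun (i : B) (p : W × ZMod 2) : W × ZMod 2 :=
  (s i * p.1 * s i, p.2 + if p.1 = s i then 1 else 0)

theorem signPermFun_involutive (i : B) : Function.Involutive (cs.signPermFun i) := by
  rintro ⟨t, ε⟩
  have hfix : s i * t * s i = s i ↔ t = s i := by
    rw [mul_assoc, mul_eq_left, mul_eq_one_iff_eq_inv, inv_simple]
  ext
  · simp [signPermFun, mul_assoc]
  · simp only [signPermFun, hfix, add_assoc, CharTwo.add_self_eq_zero, add_zero]

def signPerm (i : B) : Equiv.Perm (W × ZMod 2) := (cs.signPermFun_involutive i).toPerm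

theorem signPerm_apply (i : B) (t : W) (ε : ZMod 2) :
    cs.signPerm i (t, ε) = (s i * t * s i, ε + if t = s i then 1 else 0) := rfl

theorem prod_map_signPerm_apply (ω : List B) (t : W) (ε : ZMod 2) :
    (ω.map cs.signPerm).prod (t, ε) = (π ω * t * (π ω)⁻¹, ε + (ris ω).count t) := by
  induction ω generalizing ε with
  | nil => simp
  | cons i ω ih =>
    have hconj : π ω * t * (π ω)⁻¹ = s i ↔ (π ω)⁻¹ * s i * π ω = t := by
      constructor <;> intro h <;> [rw [← h]; rw [← h]] <;> group
    rw [map_cons, prod_cons, Equiv.Perm.mul_apply, ih, signPerm_apply, rightInvSeq, count_cons]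
    ext
    · simp only [wordProd_cons, mul_inv_rev, inv_simple]
      group
    · simp only [beq_iff_eq, hconj]
      push_cast
      ring

theorem isLiftable_signPerm : M.IsLiftable cs.signPerm := by
  intro i i'
  have hπ : π (alternatingWord i i' (2 * M i i')) = 1 := by
    rw [prod_alternatingWord_eq_mul_pow, if_pos (even_two_mul _),
      Nat.mul_div_cancel_left _ two_pos, one_mul, simple_mul_simple_pow]
  ext1 ⟨t, ε⟩
  rw [← prod_map_alternatingWord_two_mul, prod_map_signPerm_apply, hπ,
    rightInvSeq_alternatingWord_two_mul, count_append]
  simp only [mul_one, one_mul, inv_one, Equiv.Perm.one_apply, Nat.cast_add,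
    CharTwo.add_self_eq_zero, add_zero]

def signRep : W →* Equiv.Perm (W × ZMod 2) := cs.lift ⟨cs.signPerm, cs.isLiftable_signPerm⟩

theorem signRep_simple (i : B) : cs.signRep (s i) = cs.signPerm i :=
  cs.lift_apply_simple cs.isLiftable_signPerm i

theorem signRep_wordProd (ω : List B) : cs.signRep (π ω) = (ω.map cs.signPerm).prod := by
  rw [wordProd, map_list_prod, map_map]
  exact congrArg prod (map_congr_left fun i _ ↦ cs.signRep_simple i)

/-- Björner–Brenti's `η(w, t)`: by `inversionParity_wordProd`, the parity of the number of
occurrences of `t` in the right inversion sequence of any word for `w`. -/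
def inversionParity (w t : W) : ZMod 2 := (cs.signRep w (t, 0)).2

theorem inversionParity_wordProd (ω : List B) (t : W) :
    cs.inversionParity (π ω) t = (ris ω).count t := by
  simp [inversionParity, signRep_wordProd, prod_map_signPerm_apply]

theorem signRep_apply (w t : W) (ε : ZMod 2) :
    cs.signRep w (t, ε) = (w * t * w⁻¹, ε + cs.inversionParity w t) := by
  obtain ⟨ω, rfl⟩ := cs.wordProd_surjective w
  rw [signRep_wordProd, prod_map_signPerm_apply, inversionParity_wordProd]

theorem inversionParity_one (t : W) : cs.inversionParity 1 t = 0 := by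
  simp [inversionParity]

theorem inversionParity_mul (u v t : W) :
    cs.inversionParity (u * v) t
      = cs.inversionParity v t + cs.inversionParity u (v * t * v⁻¹) := by
  conv_lhs => rw [inversionParity, map_mul, Equiv.Perm.mul_apply, signRep_apply, signRep_apply]
  simp only [zero_add]

theorem inversionParity_inv_conj (w t : W) :
    cs.inversionParity w⁻¹ (w * t * w⁻¹) = cs.inversionParity w t := by
  have h := cs.inversionParity_mul w⁻¹ w t
  rwa [inv_mul_cancel, inversionParity_one, eq_comm, add_eq_zero_iff_eq_neg, CharTwo.neg_eq,
    eq_comm] at h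

theorem inversionParity_simple_self (i : B) : cs.inversionParity (s i) (s i) = 1 := by
  simp [inversionParity, signRep_simple, signPerm_apply]

variable {cs} in
theorem IsReflection.inversionParity_self {t : W} (ht : cs.IsReflection t) :
    cs.inversionParity t t = 1 := by
  obtain ⟨w, i, rfl⟩ := ht
  have hconj : w⁻¹ * (w * s i * w⁻¹) * w⁻¹⁻¹ = s i := by group
  rw [inversionParity_mul, hconj, inversionParity_mul, simple_mul_simple_self, one_mul, inv_simple,
    inversionParity_simple_self, inversionParity_inv_conj, add_left_comm, CharTwo.add_self_eq_zero,
    add_zero]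

variable {cs} in
theorem IsReflection.inversionParity_mul_self {t : W} (ht : cs.IsReflection t) (w : W) :
    cs.inversionParity (w * t) t = cs.inversionParity w t + 1 := by
  rw [inversionParity_mul, ht.mul_self, one_mul, ht.inv, ht.inversionParity_self, add_comm]

end SignRepresentation

theorem exists_wordProd_mul_eq_eraseIdx {ω : List B} {t : W} (ht : t ∈ ris ω) :
    ∃ j < ω.length, π ω * t = π (ω.eraseIdx j) := by
  obtain ⟨j, hj, rfl⟩ := mem_iff_getElem.mp ht
  rw [length_rightInvSeq] at hj
  exact ⟨j, hj, by rw [← getD_eq_getElem _ 1, wordProd_mul_getD_rightInvSeq]⟩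

theorem length_mul_lt_of_inversionParity_eq_one [DecidableEq W] {w t : W}
    (h : cs.inversionParity w t = 1) : ℓ (w * t) < ℓ w := by
  obtain ⟨ω, hω, rfl⟩ := cs.exists_isReduced w
  have hmem : t ∈ ris ω := by
    by_contra hmem
    rw [inversionParity_wordProd, count_eq_zero_of_not_mem hmem] at h
    exact zero_ne_one h
  obtain ⟨j, hj, heq⟩ := cs.exists_wordProd_mul_eq_eraseIdx hmem
  have := cs.length_wordProd_le (ω.eraseIdx j)
  rw [← heq, length_eraseIdx_of_lt hj] at this
  rw [hω.eq]
  omega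

variable {cs} in
theorem IsReflection.inversionParity_eq_one_of_length_mul_lt [DecidableEq W] {w t : W}
    (ht : cs.IsReflection t) (h : ℓ (w * t) < ℓ w) : cs.inversionParity w t = 1 := by
  by_contra hne
  have hflip : cs.inversionParity (w * t) t = 1 := by
    rw [ht.inversionParity_mul_self]
    generalize cs.inversionParity w t = x at hne ⊢
    revert x
    decide
  have := cs.length_mul_lt_of_inversionParity_eq_one hflip
  rw [mul_assoc, ht.mul_self, mul_one] at this
  omega

variable {cs} in
/-- The strong exchange condition. -/
theorem IsReflection.mem_rightInvSeq_of_length_mul_lt {t : W} (ht : cs.IsReflection t)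
    {ω : List B} (h : ℓ (π ω * t) < ℓ (π ω)) : t ∈ ris ω := by
  classical
  have := ht.inversionParity_eq_one_of_length_mul_lt h
  rw [inversionParity_wordProd] at this
  by_contra hmem
  rw [count_eq_zero_of_not_mem hmem] at this
  exact zero_ne_one this

section Parabolic

variable (J : Set B)

theorem wordProd_mem_closure {ω : List B} (hω : ∀ i ∈ ω, i ∈ J) :
    π ω ∈ Subgroup.closure (cs.simple '' J) := by
  induction ω with
  | nil => exact one_mem _
  | cons i ω ih =>
    rw [wordProd_cons]
    exact mul_mem (Subgroup.subset_closure ⟨i, hω i mem_cons_self, rfl⟩)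
      (ih fun j hj ↦ hω j (mem_cons_of_mem i hj))

theorem exists_wordProd_eq_of_mem_closure {v : W}
    (hv : v ∈ Subgroup.closure (cs.simple '' J)) :
    ∃ ω : List B, (∀ i ∈ ω, i ∈ J) ∧ π ω = v := by
  induction hv using Subgroup.closure_induction with
  | mem x hx =>
    obtain ⟨i, hi, rfl⟩ := hx
    exact ⟨[i], by simpa using hi, wordProd_singleton cs i⟩
  | one => exact ⟨[], by simp, wordProd_nil cs⟩
  | mul x y _ _ ihx ihy =>
    obtain ⟨ω, hω, rfl⟩ := ihx
    obtain ⟨ω', hω', rfl⟩ := ihy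
    exact ⟨ω ++ ω', by simpa [or_imp, forall_and] using And.intro hω hω',
      wordProd_append cs ω ω'⟩
  | inv x _ ihx =>
    obtain ⟨ω, hω, rfl⟩ := ihx
    exact ⟨ω.reverse, by simpa using hω, wordProd_reverse cs ω⟩

def IsShortestWordIn (ω : List B) : Prop :=
  (∀ i ∈ ω, i ∈ J) ∧
    ∀ ω' : List B, (∀ i ∈ ω', i ∈ J) → π ω' = π ω → ω.length ≤ ω'.length

theorem exists_isShortestWordIn {v : W} (hv : v ∈ Subgroup.closure (cs.simple '' J)) :
    ∃ ω, cs.IsShortestWordIn J ω ∧ π ω = v := by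
  obtain ⟨ω, hω, hωv⟩ :=
    (measure List.length).wf.has_min {ω | (∀ i ∈ ω, i ∈ J) ∧ π ω = v}
      (cs.exists_wordProd_eq_of_mem_closure J hv)
  refine ⟨ω, ⟨hω.1, fun ω' hω' heq ↦ ?_⟩, hω.2⟩
  exact not_lt.mp (hωv ω' ⟨hω', heq.trans hω.2⟩)

variable {J} in
theorem IsShortestWordIn.of_append_singleton {ω : List B} {j : B}
    (h : cs.IsShortestWordIn J (ω ++ [j])) : cs.IsShortestWordIn J ω := by
  refine ⟨fun i hi ↦ h.1 i (mem_append_left _ hi), fun ω' hω' heq ↦ ?_⟩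
  have := h.2 (ω' ++ [j]) (by simpa [or_imp, forall_and] using And.intro hω' (h.1 j (by simp)))
    (by rw [wordProd_append, wordProd_append, heq])
  simpa using this

/-- A shorter word for the product would, by strong exchange, shorten either `u` within its coset
or the `J`-word. -/
theorem length_mul_wordProd_of_isShortestWordIn {u : W}
    (hu : ∀ v ∈ Subgroup.closure (cs.simple '' J), ℓ u ≤ ℓ (u * v)) {ω : List B}
    (hω : cs.IsShortestWordIn J ω) : ℓ (u * π ω) = ℓ u + ω.length := by
  induction ω using List.reverseRecOn with
  | nil => simp
  | append_singleton ω j ih =>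
    have hω' := hω.of_append_singleton
    have ih := ih hω'
    rw [wordProd_append, wordProd_singleton, ← mul_assoc, length_append, length_singleton]
    rcases cs.length_mul_simple (u * π ω) j with h | h
    · omega
    exfalso
    obtain ⟨α, hα, rfl⟩ := cs.exists_isReduced u
    have hlt : ℓ (π (α ++ ω) * s j) < ℓ (π (α ++ ω)) := by rw [wordProd_append]; omega
    obtain ⟨k, hk, heq⟩ := cs.exists_wordProd_mul_eq_eraseIdx
      ((cs.isReflection_simple j).mem_rightInvSeq_of_length_mul_lt hlt)
    rw [length_append] at hk
    rcases lt_or_ge k α.length with hkα | hkα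
    · rw [eraseIdx_append_of_lt_length hkα, wordProd_append, wordProd_append] at heq
      have hmem : π ω * s j * (π ω)⁻¹ ∈ Subgroup.closure (cs.simple '' J) :=
        mul_mem (mul_mem (cs.wordProd_mem_closure J hω'.1)
          (Subgroup.subset_closure ⟨j, hω.1 j (by simp), rfl⟩))
          (inv_mem (cs.wordProd_mem_closure J hω'.1))
      have hshorter : π α * (π ω * s j * (π ω)⁻¹) = π (α.eraseIdx k) := by
        rw [← mul_assoc, ← mul_assoc, heq, mul_inv_cancel_right]
      have hle := hu _ hmem
      rw [hshorter, hα.eq] at hle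
      have := cs.length_wordProd_le (α.eraseIdx k)
      rw [length_eraseIdx_of_lt hkα] at this
      omega
    · rw [eraseIdx_append_of_length_le hkα, wordProd_append, wordProd_append, mul_assoc,
        mul_right_inj] at heq
      have := hω.2 (ω.eraseIdx (k - α.length)) (fun i hi ↦ hω'.1 i (eraseIdx_subset hi))
        (by rw [← heq, wordProd_append, wordProd_singleton])
      rw [length_eraseIdx_of_lt (by omega), length_append, length_singleton] at this
      omega

theorem le_length_mul_of_forall_not_isRightDescent {u : W}
    (hu : ∀ j ∈ J, ¬cs.IsRightDescent u j) :
    ∀ v ∈ Subgroup.closure (cs.simple '' J), ℓ u ≤ ℓ (u * v) := by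
  obtain ⟨v₀, hv₀, hmin⟩ := (measure fun v ↦ ℓ (u * v)).wf.has_min
    (Subgroup.closure (cs.simple '' J) : Set W) ⟨1, one_mem _⟩
  have hx : ∀ v ∈ Subgroup.closure (cs.simple '' J), ℓ (u * v₀) ≤ ℓ (u * v₀ * v) :=
    fun v hv ↦ not_lt.mp (by rw [mul_assoc]; exact hmin _ (mul_mem hv₀ hv))
  obtain ⟨ω, hω, hωv⟩ := cs.exists_isShortestWordIn J (inv_mem hv₀)
  have hu_eq : u * v₀ * π ω = u := by rw [hωv, mul_inv_cancel_right]
  rcases eq_nil_or_concat' ω with rfl | ⟨ω', j, rfl⟩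
  · rw [wordProd_nil, mul_one] at hu_eq
    rwa [hu_eq] at hx
  · -- `u = x · π ω` with `x` minimal in the coset: the last letter of `ω` is a descent of `u`
    refine absurd ?_ (hu j (hω.1 j (by simp)))
    set x := u * v₀
    have h₁ := cs.length_mul_wordProd_of_isShortestWordIn J hx hω
    have h₂ := cs.length_mul_wordProd_of_isShortestWordIn J hx hω.of_append_singleton
    rw [hu_eq, length_append, length_singleton] at h₁
    have hdrop : u * s j = x * π ω' := by
      rw [← hu_eq, wordProd_append, wordProd_singleton, ← mul_assoc,
        simple_mul_simple_cancel_right]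
    rw [IsRightDescent, hdrop]
    omega

theorem length_lt_length_mul_of_forall_not_isRightDescent {u v : W}
    (hu : ∀ j ∈ J, ¬cs.IsRightDescent u j) (hv : v ∈ Subgroup.closure (cs.simple '' J))
    (hv₁ : v ≠ 1) : ℓ u < ℓ (u * v) := by
  obtain ⟨ω, hω, rfl⟩ := cs.exists_isShortestWordIn J hv
  have hω₀ : ω ≠ [] := by rintro rfl; exact hv₁ (wordProd_nil cs)
  rw [cs.length_mul_wordProd_of_isShortestWordIn J
    (cs.le_length_mul_of_forall_not_isRightDescent J hu) hω]
  have := length_pos_of_ne_nil hω₀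
  omega

end Parabolic

end CoxeterSystem

section Extensions

variable {B W : Type*} [Group W] {M : CoxeterMatrix B} (cs : CoxeterSystem M W)

theorem coxeterExtension_self (w : W) : coxeterExtension cs w w = 1 :=
  Set.indicator_of_mem (Set.mem_smul_set.mpr ⟨1, one_mem _, mul_one w⟩) _

/-- `u` is the unique element of minimal length in its extension coset. -/
theorem coxeterExtension_eq_zero_of_length_le {u w : W} (hne : u ≠ w)
    (hlen : cs.length w ≤ cs.length u) : coxeterExtension cs u w = 0 := by
  refine Set.indicator_of_notMem ?_ _
  rintro ⟨v, hv, rfl⟩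
  have hv₁ : v ≠ 1 := by rintro rfl; exact hne (mul_one u).symm
  exact hlen.not_gt
    (cs.length_lt_length_mul_of_forall_not_isRightDescent _ (fun _ hj ↦ hj) hv hv₁)

end Extensions

theorem linearIndependent_of_triangular {ι R α : Type*} [Fintype ι] [Ring R] [NoZeroDivisors R]
    [LinearOrder α] (r : ι → α) (v : ι → ι → R) (hdiag : ∀ i, v i i ≠ 0)
    (hzero : ∀ i j, i ≠ j → r j ≤ r i → v i j = 0) : LinearIndependent R v := by
  classical
  rw [Fintype.linearIndependent_iff]
  intro g hg
  by_contra! ⟨i₀, hi₀⟩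
  obtain ⟨i, hi, hmin⟩ :=
    (Finset.univ.filter (g · ≠ 0)).exists_min_image r ⟨i₀, by simpa using hi₀⟩
  rw [Finset.mem_filter] at hi
  have hsum := congrFun hg i
  simp only [Finset.sum_apply, Pi.smul_apply, smul_eq_mul, Pi.zero_apply] at hsum
  rw [Finset.sum_eq_single i ?_ (by simp)] at hsum
  · exact mul_ne_zero hi.2 (hdiag i) hsum
  · intro j _ hji
    by_cases hgj : g j = 0
    · rw [hgj, zero_mul]
    · rw [hzero j i hji (hmin j (by simpa using hgj)), mul_zero]

theorem coxeter_extensions_linearIndependent_general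
    {B W : Type*} [Group W] [Fintype W]
    {M : CoxeterMatrix B} (cs : CoxeterSystem M W) :
    LinearIndependent (ZMod 2) (fun w : W => coxeterExtension cs w) :=
  linearIndependent_of_triangular cs.length _
    (fun w ↦ by rw [coxeterExtension_self]; exact one_ne_zero)
    (fun _ _ hne hlen ↦ coxeterExtension_eq_zero_of_length_le cs hne hlen)

/-- The collection of extensions `{E_w : w ∈ W}` is linearly
independent over `F₂`. -/
theorem coxeter_extensions_linearIndependent
    {B W : Type*} [Fintype B] [Group W] [Fintype W]
    {M : CoxeterMatrix B} (cs : CoxeterSystem M W) :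
    LinearIndependent (ZMod 2) (fun w : W => coxeterExtension cs w) :=
  coxeter_extensions_linearIndependent_general cs
end

section
/- Let (W,S) be a finite Coxeter system of rank m and r ∈ {−1,…,m}. The dual code of the order-r Coxeter code equals the order-(m−r−1) Coxeter code: C_W(r)^⊥ = C_W(m−r−1), where the dual is taken with respect to the standard bilinear form on F₂^W. -/
open Pointwise

/-- The order-`r` Coxeter code of type `(W,S)`: the `F₂`-span of the indicator
functions of standard cosets `σ⟨J⟩` of rank `m - r` (`m` the rank of the system). -/
noncomputable def coxeterCode {B W : Type*} [Fintype B] [Group W] [Fintype W]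
    {M : CoxeterMatrix B} (cs : CoxeterSystem M W) (r : ℤ) :
    Submodule (ZMod 2) (W → ZMod 2) :=
  Submodule.span (ZMod 2)
    {f | ∃ (σ : W) (J : Finset B), (J.card : ℤ) = (Fintype.card B : ℤ) - r ∧
      f = Set.indicator (σ • (Subgroup.closure (cs.simple '' ↑J) : Set W)) (fun _ => 1)}

/-!
Two standard cosets `x⟨J⟩`, `y⟨K⟩` with `|J| + |K| > m` share a simple reflection
`s ∈ ⟨J⟩ ∩ ⟨K⟩`, so their intersection, empty or a coset of `⟨J⟩ ∩ ⟨K⟩`, has even size; hence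
`C_W(m - r - 1) ⊆ C_W(r)^⊥`. Equality is a dimension count. If `w` has at most `r` right
descents, pick `J` of size `m - r` among its non-descents: `w` is then the unique shortest element
of `w⟨J⟩`, so these indicators are unitriangular with respect to length and
`dim C_W(r) ≥ #{w | des w ≤ r}`. Left multiplication by the longest element complements descent
sets, so `#{des ≤ r} + #{des ≤ m - r - 1} ≥ |W| = dim C_W(r) + dim C_W(r)^⊥`.

The Coxeter-theoretic input (minimal coset representatives, the longest element) rests on the
strong exchange condition, obtained from the action of `W` on `W × ZMod 2` in which `s_i` acts by
`(t, e) ↦ (s_i t s_i, e + [t = s_i])`: a word `ω` acts by adding the multiplicity of `t` in its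
right inversion sequence, whose parity therefore depends only on `π ω`.
-/

open Module
open scoped Finset

theorem List.even_count_of_getElem_add {α : Type*} [BEq α] {l : List α} {p : ℕ}
    (hl : l.length = 2 * p) (hper : ∀ k (hk : k < p), l[k + p] = l[k]) (a : α) :
    Even (l.count a) := by
  have hdrop : l.drop p = l.take p :=
    ext_getElem (by simp; omega) fun k h₁ h₂ => by
      simp [add_comm p k, hper k (by simp at h₂; omega)]
  rw [← take_append_drop p l, count_append, hdrop]
  exact ⟨_, rfl⟩

open Matrix in
theorem indicator_one_dotProduct_indicator_one {α R : Type*} [Fintype α] [NonAssocSemiring R]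
    (s t : Set α) : s.indicator 1 ⬝ᵥ t.indicator (1 : α → R) = ((s ∩ t).ncard : R) := by
  classical
  simp only [dotProduct, Set.indicator_apply, Pi.one_apply, mul_ite, mul_one, mul_zero, ← ite_and,
    Finset.sum_boole, Set.ncard_eq_toFinset_card', Set.toFinset_inter]
  congr 2
  ext x
  simp [and_comm]

open Matrix in
theorem nondegenerate_dotProductBilin {ι K : Type*} [Fintype ι] [Field K] :
    (dotProductBilin K K : LinearMap.BilinForm K (ι → K)).Nondegenerate := by
  classical
  refine ⟨fun v hv => ?_, fun v hv => ?_⟩ <;> ext i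
  · simpa using hv (Pi.single i 1)
  · simpa using hv (Pi.single i 1)

theorem even_ncard_smul_inter_smul {G : Type*} [Group G] [Finite G] {H K : Subgroup G} {g : G}
    (hg : g ∈ H ⊓ K) (hg2 : orderOf g = 2) (a b : G) :
    Even (a • (H : Set G) ∩ b • (K : Set G)).ncard := by
  rcases (a • (H : Set G) ∩ b • (K : Set G)).eq_empty_or_nonempty with h | ⟨c, hcH, hcK⟩
  · simp [h]
  rw [mem_leftCoset_iff] at hcH hcK
  rw [(leftCoset_eq_iff H).mpr hcH, (leftCoset_eq_iff K).mpr hcK, ← Set.smul_set_inter,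
    Set.ncard_smul_set, ← Subgroup.coe_inf, ← Nat.card_coe_set_eq, SetLike.coe_sort_coe,
    even_iff_two_dvd, ← hg2]
  exact Subgroup.orderOf_dvd_natCard _ hg

theorem linearIndependent_of_triangular_s7 {ι α R : Type*} [Ring R] [NoZeroDivisors R]
    {v : ι → α → R} {p : ι → α} (f : α → ℕ) (hp : Function.Injective p)
    (hdiag : ∀ i, v i (p i) ≠ 0) (htri : ∀ i x, v i x ≠ 0 → x ≠ p i → f (p i) < f x) :
    LinearIndependent R v := by
  classical
  rw [linearIndependent_iff']
  intro s g hg i hi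
  by_contra hgi
  obtain ⟨i₀, hi₀, hmin⟩ :=
    (s.filter (g · ≠ 0)).exists_min_image (f ∘ p) ⟨i, Finset.mem_filter.mpr ⟨hi, hgi⟩⟩
  rw [Finset.mem_filter] at hi₀
  have hsum := congr_fun hg (p i₀)
  rw [Finset.sum_apply, Finset.sum_eq_single_of_mem i₀ hi₀.1 fun j hj hji => ?_] at hsum
  · exact mul_ne_zero hi₀.2 (hdiag i₀) hsum
  by_contra hne
  obtain ⟨hgj, hvj⟩ := mul_ne_zero_iff.mp hne
  have := htri j (p i₀) hvj (hp.ne (Ne.symm hji))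
  have := hmin j (Finset.mem_filter.mpr ⟨hj, hgj⟩)
  simp only [Function.comp_apply] at this
  omega

namespace CoxeterSystem

open List

variable {B W : Type*} [Group W] {M : CoxeterMatrix B} (cs : CoxeterSystem M W)

local prefix:100 "s" => cs.simple
local prefix:100 "π" => cs.wordProd
local prefix:100 "ℓ" => cs.length
local prefix:100 "ris" => cs.rightInvSeq

theorem orderOf_simple (i : B) : orderOf (s i) = 2 :=
  orderOf_eq_prime (cs.simple_sq i) fun h => by simpa [h] using cs.length_simple i

theorem prod_map_alternatingWord {G : Type*} [Monoid G] (f : B → G) (i i' : B) (p : ℕ) :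
    ((alternatingWord i i' (2 * p)).map f).prod = (f i * f i') ^ p := by
  induction p with
  | zero => simp [alternatingWord]
  | succ p ih =>
    rw [show 2 * (p + 1) = 2 * p + 1 + 1 by ring, alternatingWord_succ', alternatingWord_succ']
    simp [ih, pow_succ', mul_assoc]

theorem reverse_alternatingWord (i i' : B) (p : ℕ) :
    (alternatingWord i i' (2 * p)).reverse = alternatingWord i' i (2 * p) := by
  induction p with
  | zero => simp [alternatingWord]
  | succ p ih =>
    rw [show 2 * (p + 1) = 2 * p + 1 + 1 by ring, alternatingWord_succ', alternatingWord_succ',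
      alternatingWord_succ, alternatingWord_succ]
    simp [ih]

theorem even_count_rightInvSeq_alternatingWord [DecidableEq W] (i i' : B) (t : W) :
    Even ((ris (alternatingWord i i' (2 * M i i'))).count t) := by
  rw [← reverse_alternatingWord, rightInvSeq_reverse, count_reverse]
  refine even_count_of_getElem_add (p := M i i') (by simp) (fun k hk => ?_) t
  rw [getElem_leftInvSeq_alternatingWord _ _ _ _ _ (by omega),
    getElem_leftInvSeq_alternatingWord _ _ _ _ _ (by omega),
    prod_alternatingWord_eq_mul_pow, prod_alternatingWord_eq_mul_pow]
  have h₁ : (2 * (k + M i i') + 1) / 2 = k + M i i' := by omega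
  have h₂ : (2 * k + 1) / 2 = k := by omega
  have hodd (n : ℕ) : ¬Even (2 * n + 1) := Nat.not_even_iff_odd.mpr (odd_two_mul_add_one n)
  rw [h₁, h₂, if_neg (hodd _), if_neg (hodd _), pow_add, simple_mul_simple_pow, mul_one]

section InversionParity

theorem simple_mul_mul_simple_eq_simple_iff (i : B) (t : W) : s i * t * s i = s i ↔ t = s i := by
  constructor
  · intro h
    simpa [mul_assoc] using congr_arg (fun x => s i * x * s i) h
  · rintro rfl
    simp [simple_mul_simple_self]

variable [DecidableEq W]

def invParityPerm (i : B) : Equiv.Perm (W × ZMod 2) :=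
  Function.Involutive.toPerm (fun p => (s i * p.1 * s i, p.2 + if p.1 = s i then 1 else 0)) <| by
    rintro ⟨t, e⟩
    simp only [simple_mul_mul_simple_eq_simple_iff, Prod.mk.injEq, add_assoc]
    refine ⟨by simp [mul_assoc], ?_⟩
    split_ifs <;> decide +revert

theorem invParityPerm_apply (i : B) (t : W) (e : ZMod 2) :
    cs.invParityPerm i (t, e) = (s i * t * s i, e + if t = s i then 1 else 0) := rfl

theorem prod_map_invParityPerm_apply (ω : List B) (t : W) (e : ZMod 2) :
    (ω.map cs.invParityPerm).prod (t, e) = (π ω * t * (π ω)⁻¹, e + (ris ω).count t) := by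
  induction ω generalizing t e with
  | nil => simp [rightInvSeq]
  | cons i ω ih =>
    have hcond : π ω * t * (π ω)⁻¹ = s i ↔ (π ω)⁻¹ * s i * π ω = t := by
      constructor <;> intro h <;> rw [← h] <;> group
    rw [map_cons, prod_cons, Equiv.Perm.mul_apply, ih, invParityPerm_apply]
    simp only [rightInvSeq, count_cons, beq_iff_eq, wordProd_cons, mul_inv_rev, inv_simple,
      Prod.mk.injEq, hcond]
    refine ⟨by group, ?_⟩
    split_ifs <;> push_cast <;> ring

theorem isLiftable_invParityPerm : M.IsLiftable cs.invParityPerm := by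
  intro i i'
  ext ⟨t, e⟩ : 1
  rw [← prod_map_alternatingWord, prod_map_invParityPerm_apply, wordProd,
    prod_map_alternatingWord, simple_mul_simple_pow,
    (Even.natCast_zmod_two (cs.even_count_rightInvSeq_alternatingWord i i' t))]
  simp

def invParityRep : W →* Equiv.Perm (W × ZMod 2) :=
  cs.lift ⟨cs.invParityPerm, cs.isLiftable_invParityPerm⟩

theorem invParityRep_simple (i : B) : cs.invParityRep (s i) = cs.invParityPerm i :=
  cs.lift_apply_simple cs.isLiftable_invParityPerm i

theorem invParityRep_wordProd_apply (ω : List B) (t : W) (e : ZMod 2) :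
    cs.invParityRep (π ω) (t, e) = (π ω * t * (π ω)⁻¹, e + (ris ω).count t) := by
  rw [wordProd, map_list_prod, map_map, Function.comp_def]
  simp only [invParityRep_simple]
  exact cs.prod_map_invParityPerm_apply ω t e

theorem invParityRep_apply (w t : W) (e : ZMod 2) :
    cs.invParityRep w (t, e) = (w * t * w⁻¹, e + (cs.invParityRep w (t, 0)).2) := by
  obtain ⟨ω, rfl⟩ := cs.wordProd_surjective w
  simp [invParityRep_wordProd_apply]

theorem invParityRep_apply_self {t : W} (ht : cs.IsReflection t) :
    cs.invParityRep t (t, 0) = (t, 1) := by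
  obtain ⟨u, i, rfl⟩ := ht
  set t := u * s i * u⁻¹
  set c := (cs.invParityRep u⁻¹ (t, 0)).2
  set d := (cs.invParityRep u (s i, 0)).2
  have h₁ : cs.invParityRep u⁻¹ (t, 0) = (s i, c) := by
    rw [invParityRep_apply]; simp [t, c, mul_assoc]
  have h₂ (e : ZMod 2) : cs.invParityRep u (s i, e) = (t, e + d) := invParityRep_apply ..
  have hcd : c + d = 0 := by
    have h : cs.invParityRep u (cs.invParityRep u⁻¹ (t, 0)) = (t, 0) := by
      rw [← Equiv.Perm.mul_apply, ← map_mul, mul_inv_cancel, map_one, Equiv.Perm.one_apply]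
    rw [h₁, h₂] at h
    exact congr_arg Prod.snd h
  calc cs.invParityRep t (t, 0) = cs.invParityRep u (cs.invParityPerm i (s i, c)) := by
        simp only [t, map_mul, Equiv.Perm.mul_apply, ← h₁, invParityRep_simple]
    _ = (t, 1) := by
        rw [invParityPerm_apply, if_pos rfl, simple_mul_simple_cancel_right, h₂, add_right_comm,
          hcd, zero_add]

end InversionParity

theorem mem_rightInvSeq_of_isRightInversion {ω : List B} {t : W}
    (ht : cs.IsRightInversion (π ω) t) : t ∈ ris ω := by
  classical
  obtain ⟨ω', hω', hω't⟩ := cs.exists_isReduced (π ω * t)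
  have hnot : t ∉ ris ω' := fun h => by
    have := (cs.isRightInversion_of_mem_rightInvSeq hω' h).2
    rw [← hω't, mul_assoc, ht.1.mul_self, mul_one] at this
    exact lt_asymm this ht.2
  have hπ : π ω = π ω' * t := by rw [← hω't, mul_assoc, ht.1.mul_self, mul_one]
  have hcount := congr_arg Prod.snd (congr_arg (cs.invParityRep · (t, 0)) hπ)
  simp only [map_mul, Equiv.Perm.mul_apply, invParityRep_apply_self cs ht.1, zero_add,
    invParityRep_wordProd_apply, count_eq_zero_of_not_mem hnot, Nat.cast_zero, add_zero] at hcount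
  exact count_pos_iff.mp (Nat.pos_of_ne_zero fun h => by simp [h] at hcount)

theorem rightInvSeq_append (ω ω' : List B) :
    ris (ω ++ ω') = (ris ω).map (fun t => (π ω')⁻¹ * t * π ω') ++ ris ω' := by
  induction ω with
  | nil => simp
  | cons i ω ih =>
    simp only [cons_append, rightInvSeq, ih, map_cons, wordProd_append, mul_inv_rev]
    group

theorem isRightInversion_or_of_isRightInversion_mul {x y t : W}
    (ht : cs.IsRightInversion (x * y) t) :
    cs.IsRightInversion y t ∨ cs.IsRightInversion x (y * t * y⁻¹) := by
  obtain ⟨α, hα, rfl⟩ := cs.exists_isReduced x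
  obtain ⟨β, hβ, rfl⟩ := cs.exists_isReduced y
  rw [← wordProd_append] at ht
  have hmem := cs.mem_rightInvSeq_of_isRightInversion ht
  rw [rightInvSeq_append, mem_append] at hmem
  rcases hmem with h | h
  · obtain ⟨t', ht', rfl⟩ := mem_map.mp h
    right
    simpa [mul_assoc] using cs.isRightInversion_of_mem_rightInvSeq hα ht'
  · exact .inl (cs.isRightInversion_of_mem_rightInvSeq hβ h)

theorem exists_isReduced_sublist_wordProd_mul_simple {ω : List B} (hω : cs.IsReduced ω) (i : B) :
    ∃ ω', cs.IsReduced ω' ∧ ω'.Sublist (ω ++ [i]) ∧ π ω' = π ω * s i := by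
  have hlen : ℓ (π ω) = ω.length := hω
  rcases cs.length_mul_simple (π ω) i with h | h
  · refine ⟨ω ++ [i], ?_, Sublist.refl _, by rw [wordProd_append, wordProd_singleton]⟩
    rw [IsReduced, wordProd_append, wordProd_singleton, h, hlen, length_append, length_singleton]
  · obtain ⟨k, hk, hkt⟩ := mem_iff_getElem.mp
      (cs.mem_rightInvSeq_of_isRightInversion (ω := ω) ⟨cs.isReflection_simple i, by omega⟩)
    have hπ : π ω * s i = π (ω.eraseIdx k) := by
      rw [← hkt, ← getD_eq_getElem _ 1 hk, wordProd_mul_getD_rightInvSeq]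
    refine ⟨ω.eraseIdx k, ?_, (eraseIdx_sublist ω k).trans (sublist_append_left ω [i]),
      hπ.symm⟩
    rw [length_rightInvSeq] at hk
    rw [IsReduced, ← hπ, length_eraseIdx_of_lt hk]
    omega

theorem closure_simple_induction_right {X : Set B} {p : W → Prop} (one : p 1)
    (mul_simple : ∀ v ∈ Subgroup.closure (cs.simple '' X), ∀ i ∈ X, p v → p (v * s i))
    {u : W} (hu : u ∈ Subgroup.closure (cs.simple '' X)) : p u := by
  induction hu using Subgroup.closure_induction_right with
  | one => exact one
  | mul_right v hv _ hy ih =>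
    obtain ⟨i, hi, rfl⟩ := hy
    exact mul_simple v hv i hi ih
  | mul_inv_cancel v hv _ hy ih =>
    obtain ⟨i, hi, rfl⟩ := hy
    rw [inv_simple]
    exact mul_simple v hv i hi ih

theorem exists_isReduced_of_mem_closure {X : Set B} {u : W}
    (hu : u ∈ Subgroup.closure (cs.simple '' X)) :
    ∃ ω, cs.IsReduced ω ∧ (∀ i ∈ ω, i ∈ X) ∧ π ω = u := by
  refine cs.closure_simple_induction_right
    (p := fun u => ∃ ω, cs.IsReduced ω ∧ (∀ i ∈ ω, i ∈ X) ∧ π ω = u)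
    ⟨[], by simp [IsReduced], by simp, rfl⟩ (fun v _ i hi => ?_) hu
  rintro ⟨ω, hω, hωX, rfl⟩
  obtain ⟨ω', hω', hsub, hπ⟩ := cs.exists_isReduced_sublist_wordProd_mul_simple hω i
  refine ⟨ω', hω', fun j hj => ?_, hπ⟩
  rcases mem_append.mp (hsub.subset hj) with h | h
  · exact hωX j h
  · exact mem_singleton.mp h ▸ hi

theorem exists_isRightDescent_of_mem_closure {X : Set B} {u : W}
    (hu : u ∈ Subgroup.closure (cs.simple '' X)) (h1 : u ≠ 1) :
    ∃ i ∈ X, cs.IsRightDescent u i := by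
  obtain ⟨ω, hω, hωX, rfl⟩ := cs.exists_isReduced_of_mem_closure hu
  rcases eq_nil_or_concat' ω with rfl | ⟨ω', i, rfl⟩
  · exact absurd cs.wordProd_nil h1
  · refine ⟨i, hωX i (by simp), ?_⟩
    have hlen : ℓ (π (ω' ++ [i])) = ω'.length + 1 := by
      rw [hω, length_append, length_singleton]
    rw [IsRightDescent, wordProd_append, wordProd_singleton, simple_mul_simple_cancel_right]
    rw [wordProd_append, wordProd_singleton] at hlen
    have := cs.length_wordProd_le ω'
    omega

theorem length_mul_of_forall_length_le {X : Set B} {x : W}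
    (hx : ∀ v ∈ Subgroup.closure (cs.simple '' X), ℓ x ≤ ℓ (x * v)) {u : W}
    (hu : u ∈ Subgroup.closure (cs.simple '' X)) : ℓ (x * u) = ℓ x + ℓ u := by
  refine cs.closure_simple_induction_right (p := fun u => ℓ (x * u) = ℓ x + ℓ u) (by simp)
    (fun v hv i hi ih => ?_) hu
  have h₁ : ℓ (x * v * s i) ≤ ℓ x + ℓ (v * s i) := by
    simpa [mul_assoc] using cs.length_mul_le x (v * s i)
  have h₂ := cs.length_mul_simple v i
  rw [← mul_assoc]
  rcases cs.length_mul_simple (x * v) i with hup | hdown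
  · omega
  rcases cs.isRightInversion_or_of_isRightInversion_mul (x := x) (y := v)
    ⟨cs.isReflection_simple i, by omega⟩ with h | h
  · have := h.2
    omega
  · have hsi : s i ∈ Subgroup.closure (cs.simple '' X) :=
      Subgroup.subset_closure ⟨i, hi, rfl⟩
    exact absurd h.2 (hx _ (mul_mem (mul_mem hv hsi) (inv_mem hv))).not_gt

theorem length_mul_of_forall_not_isRightDescent {X : Set B} {w : W}
    (hw : ∀ i ∈ X, ¬cs.IsRightDescent w i) {u : W}
    (hu : u ∈ Subgroup.closure (cs.simple '' X)) :
    ℓ (w * u) = ℓ w + ℓ u := by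
  set P := Subgroup.closure (cs.simple '' X)
  obtain ⟨v, hv, hmin⟩ :=
    (measure fun v => ℓ (w * v)).wf.has_min (P : Set W) ⟨1, P.one_mem⟩
  have hx (v' : W) (hv' : v' ∈ P) : ℓ (w * v) ≤ ℓ (w * v * v') := by
    rw [mul_assoc]
    exact not_lt.mp (hmin _ (mul_mem hv hv'))
  have hv1 : v = 1 := by
    by_contra hne
    obtain ⟨i, hi, hdesc⟩ :=
      cs.exists_isRightDescent_of_mem_closure (inv_mem hv) (inv_ne_one.mpr hne)
    have e₁ := cs.length_mul_of_forall_length_le hx (inv_mem hv)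
    have e₂ := cs.length_mul_of_forall_length_le hx
      (mul_mem (inv_mem hv) (Subgroup.subset_closure ⟨i, hi, rfl⟩))
    rw [mul_inv_cancel_right] at e₁
    rw [← mul_assoc, mul_inv_cancel_right] at e₂
    exact hw i hi (by unfold IsRightDescent at hdesc ⊢; omega)
  subst hv1
  simpa using cs.length_mul_of_forall_length_le (by simpa using hx) hu

theorem exists_forall_length_mul_add_length_eq [Finite W] :
    ∃ w₀ : W, ∀ u, ℓ (w₀ * u) + ℓ u = ℓ w₀ := by
  obtain ⟨w₀, hw₀⟩ := Finite.exists_max cs.length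
  refine ⟨w₀, fun u =>
    cs.simple_induction_right (p := fun u => ℓ (w₀ * u) + ℓ u = ℓ w₀) u (by simp) ?_⟩
  intro u i ih
  have h₁ : ℓ w₀ ≤ ℓ (w₀ * u * s i) + ℓ (u * s i) := by
    calc ℓ w₀ = ℓ (w₀ * u * s i * (u * s i)⁻¹) := by group
      _ ≤ _ := by rw [← length_inv cs (u * s i)]; exact cs.length_mul_le _ _
  have h₂ := cs.length_mul_simple u i
  rw [← mul_assoc]
  rcases cs.length_mul_simple (w₀ * u) i with hup | hdown
  · rcases h₂ with h₂ | h₂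
    · exfalso
      have ht : cs.IsRightInversion (w₀ * u * u⁻¹) (u * s i * u⁻¹) := by
        refine ⟨⟨u, i, rfl⟩, ?_⟩
        rw [mul_inv_cancel_right]
        exact (hw₀ _).lt_of_ne
          ((show cs.IsReflection (u * s i * u⁻¹) from ⟨u, i, rfl⟩).length_mul_left_ne w₀)
      rcases cs.isRightInversion_or_of_isRightInversion_mul ht with h | h
      · have := h.2
        have hinv : u⁻¹ * (u * s i * u⁻¹) = (u * s i)⁻¹ := by
          rw [mul_inv_rev, inv_simple]; group
        rw [hinv, length_inv, length_inv] at this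
        omega
      · have := h.2
        rw [show u⁻¹ * (u * s i * u⁻¹) * u⁻¹⁻¹ = s i by group] at this
        omega
    · omega
  · omega

section Descents

theorem isRightDescent_mul_iff {w₀ : W} (hw₀ : ∀ u, ℓ (w₀ * u) + ℓ u = ℓ w₀) (w : W)
    (i : B) :
    cs.IsRightDescent (w₀ * w) i ↔ ¬cs.IsRightDescent w i := by
  rw [IsRightDescent, IsRightDescent, mul_assoc]
  have := hw₀ w
  have := hw₀ (w * s i)
  have := cs.length_mul_simple w i
  omega

variable [Fintype B]

open Classical in
noncomputable def rightDescents (w : W) : Finset B := Finset.univ.filter (cs.IsRightDescent w)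

theorem mem_rightDescents {w : W} {i : B} : i ∈ cs.rightDescents w ↔ cs.IsRightDescent w i := by
  simp [rightDescents]

theorem card_rightDescents_mul_add_card_rightDescents {w₀ : W}
    (hw₀ : ∀ u, ℓ (w₀ * u) + ℓ u = ℓ w₀) (w : W) :
    #(cs.rightDescents (w₀ * w)) + #(cs.rightDescents w) = Fintype.card B := by
  classical
  have hcompl : cs.rightDescents (w₀ * w) = Finset.univ.filter (¬cs.IsRightDescent w ·) := by
    ext i
    simp [rightDescents, cs.isRightDescent_mul_iff hw₀]
  rw [hcompl, rightDescents, add_comm, Finset.card_filter_add_card_filter_not, Finset.card_univ]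

theorem card_le_card_filter_add_card_filter [Fintype W] {r₁ r₂ : ℤ}
    (h : r₁ + r₂ + 1 = Fintype.card B) :
    Fintype.card W ≤ #{w | (#(cs.rightDescents w) : ℤ) ≤ r₁} +
      #{w | (#(cs.rightDescents w) : ℤ) ≤ r₂} := by
  obtain ⟨w₀, hw₀⟩ := cs.exists_forall_length_mul_add_length_eq
  have hinj : #{w | ¬(#(cs.rightDescents w) : ℤ) ≤ r₁} ≤
      #{w | (#(cs.rightDescents w) : ℤ) ≤ r₂} := by
    refine Finset.card_le_card_of_injOn (w₀ * ·) (fun w hw => ?_)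
      (mul_right_injective w₀).injOn
    simp only [Finset.coe_filter, Finset.mem_univ, true_and, Set.mem_ofPred_eq] at hw ⊢
    have := cs.card_rightDescents_mul_add_card_rightDescents hw₀ w
    omega
  have := @Finset.card_filter_add_card_filter_not W Finset.univ
    (fun w => (#(cs.rightDescents w) : ℤ) ≤ r₁) _ _
  rw [Finset.card_univ] at this
  omega

end Descents

end CoxeterSystem

section Code

variable {B W : Type*} [Fintype B] [Group W] [Fintype W] {M : CoxeterMatrix B}
  (cs : CoxeterSystem M W)

theorem coxeterCode_le_orthogonal {r₁ r₂ : ℤ} (h : r₁ + r₂ < Fintype.card B) :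
    coxeterCode cs r₂ ≤
      LinearMap.BilinForm.orthogonal (dotProductBilin (ZMod 2) (ZMod 2)) (coxeterCode cs r₁) := by
  classical
  rw [coxeterCode, Submodule.span_le]
  rintro g ⟨b, K, hK, rfl⟩
  have hker : coxeterCode cs r₁ ≤ LinearMap.ker ((dotProductBilin (ZMod 2) (ZMod 2)).flip
      (Set.indicator (b • (Subgroup.closure (cs.simple '' ↑K) : Set W)) (fun _ => 1))) := by
    rw [coxeterCode, Submodule.span_le]
    rintro f ⟨a, J, hJ, rfl⟩
    obtain ⟨i, hi⟩ : (J ∩ K).Nonempty := Finset.inter_nonempty_of_card_lt_card_add_card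
      (Finset.subset_univ J) (Finset.subset_univ K) (by rw [Finset.card_univ]; omega)
    rw [Finset.mem_inter] at hi
    have hsi : cs.simple i ∈
        Subgroup.closure (cs.simple '' ↑J) ⊓ Subgroup.closure (cs.simple '' ↑K) :=
      ⟨Subgroup.subset_closure ⟨i, hi.1, rfl⟩, Subgroup.subset_closure ⟨i, hi.2, rfl⟩⟩
    exact (indicator_one_dotProduct_indicator_one _ _).trans
      (even_ncard_smul_inter_smul hsi (cs.orderOf_simple i) a b).natCast_zmod_two
  exact fun f hf => hker hf

theorem card_filter_le_finrank_coxeterCode {r : ℤ} (hr : r ≤ Fintype.card B) :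
    #{w | (#(cs.rightDescents w) : ℤ) ≤ r} ≤ finrank (ZMod 2) (coxeterCode cs r) := by
  classical
  set S : Finset W := {w | (#(cs.rightDescents w) : ℤ) ≤ r}
  have hJ (w : S) : ∃ J : Finset B,
      (#J : ℤ) = Fintype.card B - r ∧ ∀ i ∈ J, ¬cs.IsRightDescent w i := by
    have hw := (Finset.mem_filter.mp w.2).2
    obtain ⟨J, hJsub, hJcard⟩ := Finset.exists_subset_card_eq (s := (cs.rightDescents w)ᶜ)
      (n := (Fintype.card B - r).toNat) (by rw [Finset.card_compl]; omega)
    exact ⟨J, by omega, fun i hi hdesc =>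
      Finset.mem_compl.mp (hJsub hi) (cs.mem_rightDescents.mpr hdesc)⟩
  choose J hJcard hJdesc using hJ
  let v (w : S) : W → ZMod 2 :=
    Set.indicator (w.1 • (Subgroup.closure (cs.simple '' ↑(J w)) : Set W)) (fun _ => 1)
  have hv : LinearIndependent (ZMod 2) v := by
    refine linearIndependent_of_triangular_s7 cs.length Subtype.val_injective (fun w => ?_)
      fun w x hx hxw => ?_
    · simp [v, mem_leftCoset_iff]
    · have hxw' : (w : W)⁻¹ * x ≠ 1 := fun h => hxw (inv_mul_eq_one.mp h).symm
      have hlen := cs.length_mul_of_forall_not_isRightDescent (hJdesc w)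
        ((mem_leftCoset_iff _).mp (Set.mem_of_indicator_ne_zero hx))
      rw [mul_inv_cancel_left] at hlen
      have := cs.length_eq_zero_iff.not.mpr hxw'
      omega
  calc #S = Fintype.card S := (Fintype.card_coe S).symm
    _ = finrank (ZMod 2) (Submodule.span (ZMod 2) (Set.range v)) := (finrank_span_eq_card hv).symm
    _ ≤ finrank (ZMod 2) (coxeterCode cs r) := by
      refine Submodule.finrank_mono (Submodule.span_le.mpr (Set.range_subset_iff.mpr fun w => ?_))
      exact Submodule.subset_span ⟨w, J w, hJcard w, rfl⟩

end Code

/-- duality: `C_W(r)^⊥ = C_W(m−r−1)` with respect to the standard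
bilinear form `f·g = ∑ x, f x * g x` on `F₂^W`. -/
theorem coxeterCode_dual {B W : Type*} [Fintype B] [Group W] [Fintype W]
    {M : CoxeterMatrix B} (cs : CoxeterSystem M W) (r : ℤ)
    (h₁ : -1 ≤ r) (h₂ : r ≤ (Fintype.card B : ℤ)) :
    ∀ g : W → ZMod 2,
      (∀ f ∈ coxeterCode cs r, ∑ x : W, f x * g x = 0) ↔
        g ∈ coxeterCode cs ((Fintype.card B : ℤ) - r - 1) := by
  have hle := coxeterCode_le_orthogonal cs (r₁ := r) (r₂ := Fintype.card B - r - 1) (by omega)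
  have hdim : finrank (ZMod 2)
      (LinearMap.BilinForm.orthogonal (dotProductBilin (ZMod 2) (ZMod 2)) (coxeterCode cs r))
      ≤ finrank (ZMod 2) (coxeterCode cs (Fintype.card B - r - 1)) := by
    rw [LinearMap.BilinForm.finrank_orthogonal nondegenerate_dotProductBilin,
      finrank_fintype_fun_eq_card]
    have := card_filter_le_finrank_coxeterCode cs h₂
    have := card_filter_le_finrank_coxeterCode cs (r := Fintype.card B - r - 1) (by omega)
    have := cs.card_le_card_filter_add_card_filter (r₁ := r) (r₂ := Fintype.card B - r - 1)
      (by ring)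
    omega
  intro g
  rw [Submodule.eq_of_le_of_finrank_le hle hdim]
  exact Iff.rfl
end

section
/- Let (W,S) be a finite Coxeter system of rank m. For r₁, r₂ ∈ {−1,…,m}, the coordinate-wise (Schur) product of Coxeter codes satisfies C_W(r₁) ⊙ C_W(r₂) ⊆ C_W(r₁+r₂), with the convention C_W(r) = F₂^W for r ≥ m. -/
open Pointwise

/-!
The Schur product of two generators is the indicator of `σ₁⟨J₁⟩ ∩ σ₂⟨J₂⟩`. Since
`|J₁ ∩ J₂| ≥ |J₁| + |J₂| - m = m - (r₁ + r₂)`, there is `J ⊆ J₁ ∩ J₂` of size exactly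
`m - (r₁ + r₂)`; both cosets, hence their intersection, are unions of left cosets of `⟨J⟩`,
so the intersection is a disjoint union of generators `σ⟨J⟩` of `C_W(r₁ + r₂)`.
Bilinearity of the product extends this from generators to the codes.
-/

namespace QuotientGroup

variable {W : Type*} [Group W]

theorem preimage_mk_singleton_eq_smul (P : Subgroup W) (q : W ⧸ P) :
    (mk ⁻¹' {q} : Set W) = q.out • (P : Set W) := by
  rw [← eq_class_eq_leftCoset, out_eq']
  rfl

theorem smul_subgroup_eq_preimage_image_mk {P H : Subgroup W} (hPH : P ≤ H) (σ : W) :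
    σ • (H : Set W) = mk ⁻¹' (mk '' (σ • (H : Set W)) : Set (W ⧸ P)) := by
  refine (Set.subset_preimage_image _ _).antisymm ?_
  rintro y ⟨x, hx, hxy⟩
  rw [Set.mem_smul_set_iff_inv_smul_mem, smul_eq_mul] at hx ⊢
  have hxy : x⁻¹ * y ∈ H := hPH (QuotientGroup.eq.mp hxy)
  simpa [mul_assoc] using H.mul_mem hx hxy

theorem indicator_preimage_mk_mem_span {R : Type*} [Semiring R] (P : Subgroup W)
    {S : Set (W ⧸ P)} (hS : S.Finite) :
    (mk ⁻¹' S).indicator (fun _ => (1 : R)) ∈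
      Submodule.span R {f | ∃ σ : W, f = (σ • (P : Set W)).indicator fun _ => 1} := by
  obtain ⟨T, rfl⟩ := hS.exists_finset_coe
  rw [← Set.biUnion_preimage_singleton, Finset.set_biUnion_coe,
    Finset.indicator_biUnion _ _ (Set.pairwiseDisjoint_fiber _ _), ← Finset.sum_fn]
  refine Submodule.sum_mem _ fun q _ => Submodule.subset_span ⟨q.out, ?_⟩
  rw [preimage_mk_singleton_eq_smul]

end QuotientGroup

theorem Finset.exists_subset_inter_card_eq {B : Type*} [Fintype B] [DecidableEq B]
    {J₁ J₂ : Finset B} {k : ℕ} (hk : Fintype.card B + k ≤ J₁.card + J₂.card) :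
    ∃ J ⊆ J₁ ∩ J₂, J.card = k := by
  refine Finset.exists_subset_card_eq ?_
  have hunion := Finset.card_union_add_card_inter J₁ J₂
  have huniv := (J₁ ∪ J₂).card_le_univ
  omega

theorem indicator_inter_smul_closure_mem_coxeterCode {B W : Type*} [Fintype B] [Group W]
    [Fintype W] {M : CoxeterMatrix B} (cs : CoxeterSystem M W) {r₁ r₂ : ℤ}
    (hr : r₁ + r₂ < Fintype.card B) (σ₁ σ₂ : W) {J₁ J₂ : Finset B}
    (hJ₁ : (J₁.card : ℤ) = Fintype.card B - r₁) (hJ₂ : (J₂.card : ℤ) = Fintype.card B - r₂) :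
    (σ₁ • (Subgroup.closure (cs.simple '' ↑J₁) : Set W) ∩
        σ₂ • (Subgroup.closure (cs.simple '' ↑J₂) : Set W)).indicator (fun _ => 1) ∈
      coxeterCode cs (r₁ + r₂) := by
  classical
  obtain ⟨J, hJ, hJcard⟩ := Finset.exists_subset_inter_card_eq (J₁ := J₁) (J₂ := J₂)
    (k := (Fintype.card B - (r₁ + r₂)).toNat) (by omega)
  set P := Subgroup.closure (cs.simple '' ↑J)
  have hP : ∀ J' : Finset B, J ⊆ J' → P ≤ Subgroup.closure (cs.simple '' ↑J') := fun J' h =>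
    Subgroup.closure_mono (Set.image_mono (Finset.coe_subset.mpr h))
  rw [QuotientGroup.smul_subgroup_eq_preimage_image_mk (hP J₁ (hJ.trans Finset.inter_subset_left)),
    QuotientGroup.smul_subgroup_eq_preimage_image_mk (hP J₂ (hJ.trans Finset.inter_subset_right)),
    ← Set.preimage_inter]
  refine Submodule.span_le.mpr ?_ (QuotientGroup.indicator_preimage_mk_mem_span P (Set.toFinite _))
  rintro _ ⟨σ, rfl⟩
  exact Submodule.subset_span ⟨σ, J, by omega, rfl⟩

theorem coxeterCode_schur_mul_general {B W : Type*} [Fintype B] [Group W] [Fintype W]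
    {M : CoxeterMatrix B} (cs : CoxeterSystem M W) (r₁ r₂ : ℤ) :
    ∀ f ∈ coxeterCode cs r₁, ∀ g ∈ coxeterCode cs r₂,
      f * g ∈ (if (Fintype.card B : ℤ) ≤ r₁ + r₂ then ⊤ else coxeterCode cs (r₁ + r₂)) := by
  intro f hf g hg
  split_ifs with hm
  · trivial
  have hfg := Submodule.mul_mem_mul hf hg
  unfold coxeterCode at hfg
  rw [Submodule.span_mul_span] at hfg
  refine Submodule.span_le.mpr ?_ hfg
  rintro _ ⟨_, ⟨σ₁, J₁, hJ₁, rfl⟩, _, ⟨σ₂, J₂, hJ₂, rfl⟩, rfl⟩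
  dsimp only
  rw [← Pi.one_def, ← Set.inter_indicator_one]
  exact indicator_inter_smul_closure_mem_coxeterCode cs (not_le.mp hm) σ₁ σ₂ hJ₁ hJ₂

/-- multiplication: `C_W(r₁) ⊙ C_W(r₂) ⊆ C_W(r₁+r₂)`, where `⊙` is
the coordinate-wise (Schur) product, with the convention `C_W(r) = F₂^W` for `r ≥ m`. -/
theorem coxeterCode_schur_mul {B W : Type*} [Fintype B] [Group W] [Fintype W]
    {M : CoxeterMatrix B} (cs : CoxeterSystem M W) (r₁ r₂ : ℤ)
    (h₁ : -1 ≤ r₁) (h₂ : -1 ≤ r₂)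
    (h₁' : r₁ ≤ (Fintype.card B : ℤ)) (h₂' : r₂ ≤ (Fintype.card B : ℤ)) :
    ∀ f ∈ coxeterCode cs r₁, ∀ g ∈ coxeterCode cs r₂,
      f * g ∈ (if (Fintype.card B : ℤ) ≤ r₁ + r₂ then ⊤ else coxeterCode cs (r₁ + r₂)) :=
  coxeterCode_schur_mul_general cs r₁ r₂
end

section
/- Let (W,S) be a finite Coxeter system of rank m and r ∈ {−1,…,m}. The Coxeter code C_W(r) is a left ideal of the group algebra F₂W: for every f ∈ F₂W, f ∗ C_W(r) ⊆ C_W(r), where ∗ denotes convolution. -/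
open Pointwise

/-- group code: `C_W(r)` is a left ideal of the group algebra `F₂W`:
convolving any `f ∈ F₂W` with a codeword yields a codeword. -/
theorem coxeterCode_left_ideal {B W : Type*} [Fintype B] [Group W] [Fintype W]
    {M : CoxeterMatrix B} (cs : CoxeterSystem M W) (r : ℤ)
    (f : W → ZMod 2) (g : W → ZMod 2) (hg : g ∈ coxeterCode cs r) :
    (fun u : W => ∑ x : W, f x * g (x⁻¹ * u)) ∈ coxeterCode cs r := by
  induction hg using Submodule.span_induction with
  | mem g hg =>
    obtain ⟨σ, J, hJ, rfl⟩ := hg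
    have key : (fun u : W => ∑ x : W, f x *
        Set.indicator (σ • (Subgroup.closure (cs.simple '' ↑J) : Set W)) (fun _ => 1) (x⁻¹ * u))
        = ∑ x : W, f x • Set.indicator
            ((x * σ) • (Subgroup.closure (cs.simple '' ↑J) : Set W)) (fun _ => (1 : ZMod 2)) := by
      funext u
      simp only [Finset.sum_apply, Pi.smul_apply, smul_eq_mul]
      refine Finset.sum_congr rfl fun x _ => ?_
      congr 1
      have hmem : (x⁻¹ * u ∈ σ • (Subgroup.closure (cs.simple '' ↑J) : Set W)) ↔
          (u ∈ (x * σ) • (Subgroup.closure (cs.simple '' ↑J) : Set W)) := by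
        rw [Set.mem_smul_set_iff_inv_smul_mem, Set.mem_smul_set_iff_inv_smul_mem]
        simp [mul_assoc]
      by_cases h : u ∈ (x * σ) • (Subgroup.closure (cs.simple '' ↑J) : Set W)
      · rw [Set.indicator_of_mem (hmem.mpr h), Set.indicator_of_mem h]
      · rw [Set.indicator_of_notMem (fun hc => h (hmem.mp hc)), Set.indicator_of_notMem h]
    rw [key]
    exact Submodule.sum_mem _ fun x _ =>
      Submodule.smul_mem _ _ (Submodule.subset_span ⟨x * σ, J, hJ, rfl⟩)
  | zero =>
    have : (fun u : W => ∑ x : W, f x * (0 : W → ZMod 2) (x⁻¹ * u)) = 0 := by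
      funext u; simp
    rw [this]; exact zero_mem _
  | add a b _ _ ha hb =>
    have : (fun u : W => ∑ x : W, f x * (a + b) (x⁻¹ * u))
        = (fun u : W => ∑ x : W, f x * a (x⁻¹ * u)) + (fun u : W => ∑ x : W, f x * b (x⁻¹ * u)) := by
      funext u; simp [mul_add, Finset.sum_add_distrib]
    rw [this]; exact add_mem ha hb
  | smul c a _ ha =>
    have : (fun u : W => ∑ x : W, f x * (c • a) (x⁻¹ * u))
        = c • (fun u : W => ∑ x : W, f x * a (x⁻¹ * u)) := by
      funext u; simp [Finset.mul_sum, mul_left_comm]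
    rw [this]; exact Submodule.smul_mem _ c ha
end
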